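/- arXiv:1708.03983 — 4 statements merged into one kernel-verified Lean document; each statement's English description precedes it below -/
import Mathlib

section
/- Let Ω ⊂ ℝⁿ be a nonempty open bounded convex set. Then the Hilbert metric d_Ω is a metric on Ω: for all x, y, z ∈ Ω one has d_Ω(x,y) ≥ 0; d_Ω(x,y) = 0 if and only if x = y; d_Ω(x,y) = d_Ω(y,x); and d_Ω(x,z) ≤ d_Ω(x,y) + d_Ω(y,z). -/
open Set
open scoped Classical

/-- The Hilbert metric on a nonempty open bounded convex set `Ω ⊂ ℝⁿ`:
for `x ≠ y`, `d_Ω(x,y) = ½|log((‖y−p‖·‖x−q‖)/(‖y−q‖·‖x−p‖))|`, where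
`p = x + t⁻•(y−x)` and `q = x + t⁺•(y−x)` are the two intersection points of the
line through `x` and `y` with `∂Ω`, given by `t⁻ = inf {t | x + t•(y−x) ∈ Ω}` and
`t⁺ = sup {t | x + t•(y−x) ∈ Ω}`; and `d_Ω(x,x) = 0`. -/
noncomputable def hilbertDist {n : ℕ} (Ω : Set (EuclideanSpace ℝ (Fin n)))
    (x y : EuclideanSpace ℝ (Fin n)) : ℝ :=
  if x = y then 0
  else
    let p := x + sInf {t : ℝ | x + t • (y - x) ∈ Ω} • (y - x)
    let q := x + sSup {t : ℝ | x + t • (y - x) ∈ Ω} • (y - x)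
    (1 / 2) * |Real.log ((‖y - p‖ * ‖x - q‖) / (‖y - q‖ * ‖x - p‖))|

section Aux

variable {n : ℕ} {Ω : Set (EuclideanSpace ℝ (Fin n))}
variable {x y z : EuclideanSpace ℝ (Fin n)}

/-- The parameter set of the line through `x` and `y` inside `Ω`. -/
def lineSet (Ω : Set (EuclideanSpace ℝ (Fin n))) (x y : EuclideanSpace ℝ (Fin n)) : Set ℝ :=
  {t : ℝ | x + t • (y - x) ∈ Ω}

lemma zero_mem_lineSet (hx : x ∈ Ω) : (0 : ℝ) ∈ lineSet Ω x y := by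
  simp [lineSet, hx]

lemma one_mem_lineSet (hy : y ∈ Ω) : (1 : ℝ) ∈ lineSet Ω x y := by
  simp [lineSet, hy]

lemma lineSet_nonempty (hy : y ∈ Ω) : (lineSet Ω x y).Nonempty := ⟨1, one_mem_lineSet hy⟩

lemma continuous_lineMap :
    Continuous (fun t : ℝ => x + t • (y - x)) := by fun_prop

lemma isOpen_lineSet (hopen : IsOpen Ω) : IsOpen (lineSet Ω x y) :=
  hopen.preimage continuous_lineMap

lemma bdd_lineSet (hbdd : Bornology.IsBounded Ω) (hxy : x ≠ y) :
    BddAbove (lineSet Ω x y) ∧ BddBelow (lineSet Ω x y) := by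
  obtain ⟨C, hC⟩ := hbdd.exists_norm_le
  have hd : 0 < ‖y - x‖ := by
    rw [norm_pos_iff, sub_ne_zero]; exact fun h => hxy h.symm
  have key : ∀ t ∈ lineSet Ω x y, |t| ≤ (C + ‖x‖) / ‖y - x‖ := by
    intro t ht
    have h1 : ‖x + t • (y - x)‖ ≤ C := hC _ ht
    have h2 : ‖t • (y - x)‖ ≤ C + ‖x‖ := by
      calc ‖t • (y - x)‖ = ‖(x + t • (y - x)) - x‖ := by rw [add_sub_cancel_left]
        _ ≤ ‖x + t • (y - x)‖ + ‖x‖ := norm_sub_le _ _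
        _ ≤ C + ‖x‖ := by linarith
    rw [norm_smul, Real.norm_eq_abs] at h2
    rw [le_div_iff₀ hd]
    exact h2
  constructor
  · exact ⟨(C + ‖x‖) / ‖y - x‖, fun t ht => (le_abs_self t).trans (key t ht)⟩
  · exact ⟨-((C + ‖x‖) / ‖y - x‖), fun t ht => neg_le_of_abs_le (key t ht)⟩

lemma one_lt_sSup_lineSet (hopen : IsOpen Ω) (hbdd : Bornology.IsBounded Ω)
    (hy : y ∈ Ω) (hxy : x ≠ y) : 1 < sSup (lineSet Ω x y) := by
  obtain ⟨ε, hε, hball⟩ := Metric.isOpen_iff.1 (isOpen_lineSet hopen) 1 (one_mem_lineSet hy)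
  have hmem : 1 + ε / 2 ∈ lineSet Ω x y := by
    apply hball
    rw [Metric.mem_ball, Real.dist_eq, show (1 + ε / 2 - 1 : ℝ) = ε / 2 by ring,
      abs_of_pos (by linarith)]
    linarith
  have := le_csSup (bdd_lineSet hbdd hxy).1 hmem
  linarith

lemma sInf_lineSet_neg (hopen : IsOpen Ω) (hbdd : Bornology.IsBounded Ω)
    (hx : x ∈ Ω) (hxy : x ≠ y) : sInf (lineSet Ω x y) < 0 := by
  obtain ⟨ε, hε, hball⟩ := Metric.isOpen_iff.1 (isOpen_lineSet hopen) 0 (zero_mem_lineSet hx)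
  have hmem : -(ε / 2) ∈ lineSet Ω x y := by
    apply hball
    rw [Metric.mem_ball, Real.dist_eq, show (-(ε / 2) - 0 : ℝ) = -(ε / 2) by ring, abs_neg,
      abs_of_pos (by linarith)]
    linarith
  have := csInf_le (bdd_lineSet hbdd hxy).2 hmem
  linarith

lemma sSup_lineSet_not_mem (hopen : IsOpen Ω) (hbdd : Bornology.IsBounded Ω)
    (hxy : x ≠ y) : sSup (lineSet Ω x y) ∉ lineSet Ω x y := by
  intro h
  obtain ⟨ε, hε, hball⟩ := Metric.isOpen_iff.1 (isOpen_lineSet hopen) _ h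
  have hmem : sSup (lineSet Ω x y) + ε / 2 ∈ lineSet Ω x y := by
    apply hball
    rw [Metric.mem_ball, Real.dist_eq,
      show (sSup (lineSet Ω x y) + ε / 2 - sSup (lineSet Ω x y) : ℝ) = ε / 2 by ring,
      abs_of_pos (by linarith)]
    linarith
  have := le_csSup (bdd_lineSet hbdd hxy).1 hmem
  linarith

lemma sSup_point_mem_closure (hbdd : Bornology.IsBounded Ω) (hy : y ∈ Ω) (hxy : x ≠ y) :
    x + sSup (lineSet Ω x y) • (y - x) ∈ closure Ω := by
  have h1 : sSup (lineSet Ω x y) ∈ closure (lineSet Ω x y) :=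
    csSup_mem_closure (lineSet_nonempty hy) (bdd_lineSet hbdd hxy).1
  exact map_mem_closure (f := fun t : ℝ => x + t • (y - x)) continuous_lineMap h1
    (fun t ht => ht)

lemma lineMap_apply_functional (f : EuclideanSpace ℝ (Fin n) →L[ℝ] ℝ) (B : ℝ) :
    f (x + B • (y - x)) = f x + B * (f y - f x) := by
  simp [map_add, map_smul, map_sub]

/-- Key bound: any halfspace `{f < c}` containing `Ω` gives a bound. -/
lemma funk_bound (hbdd : Bornology.IsBounded Ω) (hy : y ∈ Ω) (hxy : x ≠ y)
    (f : EuclideanSpace ℝ (Fin n) →L[ℝ] ℝ) (c : ℝ) (hf : ∀ a ∈ Ω, f a < c) :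
    (c - f x) * (sSup (lineSet Ω x y) - 1) ≤ (c - f y) * sSup (lineSet Ω x y) := by
  set B := sSup (lineSet Ω x y) with hB
  have hq : f (x + B • (y - x)) ≤ c := by
    have hcl : closure Ω ⊆ {w | f w ≤ c} :=
      closure_minimal (fun a ha => (hf a ha).le) (isClosed_le f.continuous continuous_const)
    exact hcl (sSup_point_mem_closure hbdd hy hxy)
  rw [lineMap_apply_functional] at hq
  nlinarith [hq]

/-- A supporting halfspace at the endpoint gives equality. -/
lemma funk_exists_eq (hopen : IsOpen Ω) (hbdd : Bornology.IsBounded Ω)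
    (hconv : Convex ℝ Ω) (hxy : x ≠ y) :
    ∃ (f : EuclideanSpace ℝ (Fin n) →L[ℝ] ℝ) (c : ℝ), (∀ a ∈ Ω, f a < c) ∧
      (c - f x) * (sSup (lineSet Ω x y) - 1) = (c - f y) * sSup (lineSet Ω x y) := by
  set B := sSup (lineSet Ω x y) with hB
  have hqnot : x + B • (y - x) ∉ Ω := sSup_lineSet_not_mem hopen hbdd hxy
  obtain ⟨f, hf⟩ := geometric_hahn_banach_open_point hconv hopen hqnot
  refine ⟨f, f (x + B • (y - x)), hf, ?_⟩
  rw [lineMap_apply_functional]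
  ring

/-- The Funk "metric". -/
noncomputable def funk (Ω : Set (EuclideanSpace ℝ (Fin n)))
    (x y : EuclideanSpace ℝ (Fin n)) : ℝ :=
  Real.log (sSup (lineSet Ω x y) / (sSup (lineSet Ω x y) - 1))

lemma funk_pos (hopen : IsOpen Ω) (hbdd : Bornology.IsBounded Ω)
    (hy : y ∈ Ω) (hxy : x ≠ y) : 0 < funk Ω x y := by
  have hB : 1 < sSup (lineSet Ω x y) := one_lt_sSup_lineSet hopen hbdd hy hxy
  apply Real.log_pos
  rw [lt_div_iff₀ (by linarith)]
  linarith

lemma funk_ge_log (hopen : IsOpen Ω) (hbdd : Bornology.IsBounded Ω)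
    (hx : x ∈ Ω) (hy : y ∈ Ω) (hxy : x ≠ y)
    (f : EuclideanSpace ℝ (Fin n) →L[ℝ] ℝ) (c : ℝ) (hf : ∀ a ∈ Ω, f a < c) :
    Real.log (c - f x) - Real.log (c - f y) ≤ funk Ω x y := by
  have hB : 1 < sSup (lineSet Ω x y) := one_lt_sSup_lineSet hopen hbdd hy hxy
  have hu : 0 < c - f x := by linarith [hf x hx]
  have hv : 0 < c - f y := by linarith [hf y hy]
  have hkey := funk_bound hbdd hy hxy f c hf
  rw [← Real.log_div hu.ne' hv.ne']
  apply Real.log_le_log (div_pos hu hv)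
  rw [div_le_div_iff₀ hv (by linarith)]
  linarith [hkey]

lemma funk_eq_log (hopen : IsOpen Ω) (hbdd : Bornology.IsBounded Ω) (hconv : Convex ℝ Ω)
    (hx : x ∈ Ω) (hy : y ∈ Ω) (hxy : x ≠ y) :
    ∃ (f : EuclideanSpace ℝ (Fin n) →L[ℝ] ℝ) (c : ℝ), (∀ a ∈ Ω, f a < c) ∧
      funk Ω x y = Real.log (c - f x) - Real.log (c - f y) := by
  obtain ⟨f, c, hf, heq⟩ := funk_exists_eq hopen hbdd hconv (y := y) hxy
  have hB : 1 < sSup (lineSet Ω x y) := one_lt_sSup_lineSet hopen hbdd hy hxy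
  have hu : 0 < c - f x := by linarith [hf x hx]
  have hv : 0 < c - f y := by linarith [hf y hy]
  refine ⟨f, c, hf, ?_⟩
  rw [← Real.log_div hu.ne' hv.ne']
  unfold funk
  congr 1
  rw [div_eq_div_iff (by linarith) hv.ne']
  linarith [heq]

lemma funk_triangle (hopen : IsOpen Ω) (hbdd : Bornology.IsBounded Ω) (hconv : Convex ℝ Ω)
    (hx : x ∈ Ω) (hy : y ∈ Ω) (hz : z ∈ Ω) (hxy : x ≠ y) (hyz : y ≠ z) (hxz : x ≠ z) :
    funk Ω x z ≤ funk Ω x y + funk Ω y z := by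
  obtain ⟨f, c, hf, heq⟩ := funk_eq_log hopen hbdd hconv hx hz hxz
  have h1 := funk_ge_log hopen hbdd hx hy hxy f c hf
  have h2 := funk_ge_log hopen hbdd hy hz hyz f c hf
  linarith

lemma lineSet_swap : lineSet Ω y x = (fun t : ℝ => 1 - t) ⁻¹' lineSet Ω x y := by
  have key : ∀ t : ℝ, y + t • (x - y) = x + (1 - t) • (y - x) := by
    intro t; module
  ext t
  simp only [lineSet, mem_setOf_eq, mem_preimage, key t]

lemma sSup_lineSet_swap (hbdd : Bornology.IsBounded Ω) (hx : x ∈ Ω) (hy : y ∈ Ω) (hxy : x ≠ y) :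
    sSup (lineSet Ω y x) = 1 - sInf (lineSet Ω x y) := by
  have hbdds := bdd_lineSet hbdd hxy
  have hne : (lineSet Ω x y).Nonempty := lineSet_nonempty hy
  apply IsLUB.csSup_eq _ (lineSet_nonempty (x := y) hx)
  constructor
  · intro t ht
    rw [lineSet_swap] at ht
    have := csInf_le hbdds.2 ht
    simp only [mem_preimage] at this
    linarith
  · intro u hu
    have hlb : ∀ s ∈ lineSet Ω x y, 1 - u ≤ s := by
      intro s hs
      have hmem : (1 - s) ∈ lineSet Ω y x := by
        rw [lineSet_swap]
        simpa using hs
      have := hu hmem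
      linarith
    have := le_csInf hne hlb
    linarith

end Aux

section Bridge

variable {n : ℕ} {Ω : Set (EuclideanSpace ℝ (Fin n))}
variable {x y z : EuclideanSpace ℝ (Fin n)}

lemma hilbertDist_nonneg' : 0 ≤ hilbertDist Ω x y := by
  unfold hilbertDist
  split_ifs
  · exact le_rfl
  · dsimp only
    positivity

lemma hilbertDist_self' : hilbertDist Ω x x = 0 := by simp [hilbertDist]

lemma hilbertDist_eq_funk (hopen : IsOpen Ω) (hbdd : Bornology.IsBounded Ω)
    (hx : x ∈ Ω) (hy : y ∈ Ω) (hxy : x ≠ y) :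
    hilbertDist Ω x y = (1 / 2) * (funk Ω x y + funk Ω y x) := by
  have hA : sInf (lineSet Ω x y) < 0 := sInf_lineSet_neg hopen hbdd hx hxy
  have hB : 1 < sSup (lineSet Ω x y) := one_lt_sSup_lineSet hopen hbdd hy hxy
  have hd : (0:ℝ) < ‖y - x‖ := by
    rw [norm_pos_iff, sub_ne_zero]; exact fun h => hxy h.symm
  set A := sInf (lineSet Ω x y) with hAdef
  set B := sSup (lineSet Ω x y) with hBdef
  have step1 : hilbertDist Ω x y =
      (1 / 2) * |Real.log ((‖y - (x + A • (y - x))‖ * ‖x - (x + B • (y - x))‖) /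
        (‖y - (x + B • (y - x))‖ * ‖x - (x + A • (y - x))‖))| := by
    unfold hilbertDist
    rw [if_neg hxy]
    rfl
  have e1 : y - (x + A • (y - x)) = (1 - A) • (y - x) := by module
  have e2 : x - (x + B • (y - x)) = (-B) • (y - x) := by module
  have e3 : y - (x + B • (y - x)) = (1 - B) • (y - x) := by module
  have e4 : x - (x + A • (y - x)) = (-A) • (y - x) := by module
  have n1 : ‖(1 - A) • (y - x)‖ = (1 - A) * ‖y - x‖ := by
    rw [norm_smul, Real.norm_eq_abs, abs_of_pos (by linarith)]
  have n2 : ‖(-B) • (y - x)‖ = B * ‖y - x‖ := by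
    rw [norm_smul, Real.norm_eq_abs, abs_neg, abs_of_pos (by linarith)]
  have n3 : ‖(1 - B) • (y - x)‖ = (B - 1) * ‖y - x‖ := by
    rw [norm_smul, Real.norm_eq_abs, abs_of_neg (by linarith)]
    ring
  have n4 : ‖(-A) • (y - x)‖ = (-A) * ‖y - x‖ := by
    rw [norm_smul, Real.norm_eq_abs, abs_neg, abs_of_neg (by linarith)]
  have hratio : ((1 - A) * ‖y - x‖ * (B * ‖y - x‖)) /
      ((B - 1) * ‖y - x‖ * ((-A) * ‖y - x‖)) =
      (B / (B - 1)) * ((1 - A) / (1 - A - 1)) := by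
    have hdd : ‖y - x‖ * ‖y - x‖ ≠ 0 := by positivity
    rw [show (1 - A) * ‖y - x‖ * (B * ‖y - x‖) = ((1 - A) * B) * (‖y - x‖ * ‖y - x‖) by ring,
      show (B - 1) * ‖y - x‖ * ((-A) * ‖y - x‖) = ((B - 1) * (-A)) * (‖y - x‖ * ‖y - x‖) by ring,
      mul_div_mul_right _ _ hdd, div_mul_div_comm, show (1 - A - 1 : ℝ) = -A by ring,
      mul_comm (1 - A) B]
  have hfyx : funk Ω y x = Real.log ((1 - A) / (1 - A - 1)) := by
    unfold funk
    rw [sSup_lineSet_swap hbdd hx hy hxy]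
  have hfxy : funk Ω x y = Real.log (B / (B - 1)) := rfl
  rw [step1, e1, e2, e3, e4, n1, n2, n3, n4, hratio,
    Real.log_mul (ne_of_gt (div_pos (by linarith) (by linarith)))
      (ne_of_gt (div_pos (by linarith) (by linarith))),
    ← hfxy, ← hfyx,
    abs_of_pos (by
      have p1 := funk_pos hopen hbdd hy hxy
      have p2 := funk_pos hopen hbdd hx (Ne.symm hxy)
      linarith)]

end Bridge


/-- The Hilbert metric is a metric on a nonempty open bounded convex `Ω ⊂ ℝⁿ`:
nonnegative, vanishing exactly on the diagonal, symmetric, and satisfying the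
triangle inequality. -/
theorem hilbertDist_is_metric {n : ℕ} (Ω : Set (EuclideanSpace ℝ (Fin n)))
    (hne : Ω.Nonempty) (hopen : IsOpen Ω) (hbdd : Bornology.IsBounded Ω)
    (hconv : Convex ℝ Ω) :
    ∀ x ∈ Ω, ∀ y ∈ Ω, ∀ z ∈ Ω,
      0 ≤ hilbertDist Ω x y ∧
      (hilbertDist Ω x y = 0 ↔ x = y) ∧
      hilbertDist Ω x y = hilbertDist Ω y x ∧
      hilbertDist Ω x z ≤ hilbertDist Ω x y + hilbertDist Ω y z := by
  intro x hx y hy z hz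
  refine ⟨hilbertDist_nonneg', ?_, ?_, ?_⟩
  · constructor
    · intro h
      by_contra hxy
      have p1 := funk_pos hopen hbdd hy hxy
      have p2 := funk_pos hopen hbdd hx (Ne.symm hxy)
      rw [hilbertDist_eq_funk hopen hbdd hx hy hxy] at h
      linarith
    · rintro rfl
      exact hilbertDist_self'
  · by_cases hxy : x = y
    · subst hxy; rfl
    · rw [hilbertDist_eq_funk hopen hbdd hx hy hxy,
        hilbertDist_eq_funk hopen hbdd hy hx (Ne.symm hxy)]
      ring
  · rcases eq_or_ne x z with rfl | hxz
    · rw [hilbertDist_self']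
      exact add_nonneg hilbertDist_nonneg' hilbertDist_nonneg'
    rcases eq_or_ne x y with rfl | hxy
    · rw [hilbertDist_self', zero_add]
    rcases eq_or_ne y z with rfl | hyz
    · rw [hilbertDist_self', add_zero]
    rw [hilbertDist_eq_funk hopen hbdd hx hz hxz,
      hilbertDist_eq_funk hopen hbdd hx hy hxy,
      hilbertDist_eq_funk hopen hbdd hy hz hyz]
    have t1 := funk_triangle hopen hbdd hconv hx hy hz hxy hyz hxz
    have t2 := funk_triangle hopen hbdd hconv hz hy hx hyz.symm hxy.symm hxz.symm
    linarith
end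

section
/- Let Ω ⊂ ℝⁿ be a nonempty open bounded convex set, y ∈ Ω, and v ∈ ℝⁿ nonzero. Then lim_{t → 0⁺} d_Ω(y, y + t·v)/t = F_Ω(y, v) = (‖v‖/2)(1/‖y − v⁻‖ + 1/‖y − v⁺‖); that is, the Hilbert metric induces the Finsler structure F_Ω as its infinitesimal norm. -/
open Set
open scoped Classical

/-- The Hilbert–Finsler norm of a nonempty open bounded convex `Ω ⊂ ℝⁿ` at `y ∈ Ω`:
for `v ≠ 0`, `F_Ω(y,v) = (‖v‖/2)(1/‖y − v⁻‖ + 1/‖y − v⁺‖)`, where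
`v⁻ = y + t⁻•v` and `v⁺ = y + t⁺•v` are the intersection points of the line through
`y` in direction `v` with `∂Ω`, given by `t⁻ = inf {t | y + t•v ∈ Ω}` and
`t⁺ = sup {t | y + t•v ∈ Ω}` (so `v⁺` is on the side of positive multiples of `v`);
and `F_Ω(y,0) = 0`. -/
noncomputable def hilbertFinsler {n : ℕ} (Ω : Set (EuclideanSpace ℝ (Fin n)))
    (y v : EuclideanSpace ℝ (Fin n)) : ℝ :=
  if v = 0 then 0
  else
    let vm := y + sInf {t : ℝ | y + t • v ∈ Ω} • v
    let vp := y + sSup {t : ℝ | y + t • v ∈ Ω} • v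
    (‖v‖ / 2) * (1 / ‖y - vm‖ + 1 / ‖y - vp‖)

/-!
Along the line `t ↦ y + t • v`, the boundary points of `Ω` sit at the parameters `a = inf S` and
`b = sup S` of the open bounded set `S = {t | y + t • v ∈ Ω}`, so `a < 0 < b`. Replacing `v` by
`t • v` rescales `S` by `t⁻¹` and fixes the boundary points, so for `0 < t < b` the distance
`d_Ω(y, y + t • v)` is half the absolute value of the logarithm of the cross-ratio of `a, 0, t, b`,
the factors `‖v‖` cancelling. Dividing by `t` and letting `t → 0⁺` gives half the derivative of that
logarithm at `0`, which is `½ (1/(-a) + 1/b) = F_Ω(y, v)`.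
-/

open Filter Topology Bornology
open scoped Pointwise

theorem IsOpen.csInf_lt {α : Type*} [ConditionallyCompleteLattice α] [TopologicalSpace α]
    {S : Set α} {x : α} [(𝓝[<] x).NeBot] (hS : IsOpen S) (hbdd : BddBelow S) (hx : x ∈ S) :
    sInf S < x := by
  obtain ⟨z, hzx, hz⟩ := Filter.Eventually.exists_lt (hS.mem_nhds hx)
  exact (csInf_le hbdd hz).trans_lt hzx

theorem IsOpen.lt_csSup {α : Type*} [ConditionallyCompleteLattice α] [TopologicalSpace α]
    {S : Set α} {x : α} [(𝓝[>] x).NeBot] (hS : IsOpen S) (hbdd : BddAbove S) (hx : x ∈ S) :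
    x < sSup S := by
  obtain ⟨z, hxz, hz⟩ := Filter.Eventually.exists_gt (hS.mem_nhds hx)
  exact hxz.trans_le (le_csSup hbdd hz)

theorem HasDerivAt.tendsto_abs_div_nhdsGT_zero {f : ℝ → ℝ} {f' : ℝ} (hf : HasDerivAt f f' 0)
    (h0 : f 0 = 0) : Tendsto (fun t => |f t| / t) (𝓝[>] 0) (𝓝 |f'|) := by
  have hslope := (hasDerivAt_iff_tendsto_slope.mp hf).mono_left (nhdsGT_le_nhdsNE 0)
  refine hslope.abs.congr' ?_
  filter_upwards [self_mem_nhdsWithin] with t (ht : 0 < t)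
  rw [slope_def_field, h0, sub_zero, sub_zero, abs_div, abs_of_pos ht]

section LineParams

variable {E : Type*} [NormedAddCommGroup E] [NormedSpace ℝ E]

-- Reducible, so that `simp` and `rw` see it in the parameter sets unfolded from `hilbertDist`.
abbrev lineParams (Ω : Set E) (y v : E) : Set ℝ := {t | y + t • v ∈ Ω}

theorem isOpen_lineParams {Ω : Set E} (hΩ : IsOpen Ω) (y v : E) : IsOpen (lineParams Ω y v) :=
  hΩ.preimage (by fun_prop)

theorem isBounded_lineParams {Ω : Set E} (hΩ : IsBounded Ω) (y : E) {v : E} (hv : v ≠ 0) :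
    IsBounded (lineParams Ω y v) := by
  have : AntilipschitzWith ‖v‖₊⁻¹ fun t : ℝ => y + t • v :=
    AntilipschitzWith.of_le_mul_dist fun s t => by
      rw [dist_add_left, dist_eq_norm, dist_eq_norm, ← sub_smul, norm_smul, NNReal.coe_inv,
        coe_nnnorm, mul_comm, mul_inv_cancel_right₀ (norm_ne_zero_iff.mpr hv)]
  exact this.isBounded_preimage hΩ

theorem lineParams_smul (Ω : Set E) (y v : E) {t : ℝ} (ht : t ≠ 0) :
    lineParams Ω y (t • v) = t⁻¹ • lineParams Ω y v := by
  ext s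
  simp [Set.mem_smul_set_iff_inv_smul_mem₀ (inv_ne_zero ht), smul_smul, mul_comm]

theorem norm_add_smul_sub_add_smul (y v : E) (s t : ℝ) :
    ‖(y + s • v) - (y + t • v)‖ = |s - t| * ‖v‖ := by
  rw [add_sub_add_left_eq_sub, ← sub_smul, norm_smul, Real.norm_eq_abs]

theorem norm_sub_add_smul (y v : E) (c : ℝ) : ‖y - (y + c • v)‖ = |c| * ‖v‖ := by
  rw [sub_add_cancel_left, norm_neg, norm_smul, Real.norm_eq_abs]

end LineParams

/-- The logarithm of the cross-ratio of the points `a, 0, s, b` of the real line. -/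
noncomputable def logCrossRatio (a b s : ℝ) : ℝ := Real.log ((s - a) * b / ((b - s) * -a))

theorem logCrossRatio_zero {a b : ℝ} (ha : a ≠ 0) (hb : b ≠ 0) : logCrossRatio a b 0 = 0 := by
  rw [logCrossRatio, zero_sub, sub_zero, mul_comm, div_self (mul_ne_zero hb (neg_ne_zero.mpr ha)),
    Real.log_one]

theorem hasDerivAt_logCrossRatio_zero {a b : ℝ} (ha : a < 0) (hb : 0 < b) :
    HasDerivAt (logCrossRatio a b) (1 / -a + 1 / b) 0 := by
  have ha' := ha.ne
  have hb' := hb.ne'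
  have hnum : HasDerivAt (fun s : ℝ => (s - a) * b) b 0 := by
    simpa using ((hasDerivAt_id (0 : ℝ)).sub_const a).mul_const b
  have hden : HasDerivAt (fun s : ℝ => (b - s) * -a) a 0 := by
    simpa using ((hasDerivAt_id (0 : ℝ)).const_sub b).mul_const (-a)
  have hratio : HasDerivAt (fun s : ℝ => (s - a) * b / ((b - s) * -a)) (1 / -a + 1 / b) 0 := by
    refine (hnum.div hden (by simp [ha', hb'])).congr_deriv ?_
    field_simp
    ring
  have hratio0 : (0 - a) * b / ((b - 0) * -a) = 1 := by field_simp; ring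
  have hlog := hratio.log (by simp [ha', hb'])
  beta_reduce at hlog
  rwa [hratio0, div_one] at hlog

section HilbertLine

variable {n : ℕ} {Ω : Set (EuclideanSpace ℝ (Fin n))} {y v : EuclideanSpace ℝ (Fin n)}

theorem hilbertDist_add_smul (hv : v ≠ 0) {t : ℝ} (ha : sInf (lineParams Ω y v) < 0)
    (ht : 0 < t) (htb : t < sSup (lineParams Ω y v)) :
    hilbertDist Ω y (y + t • v) =
      1 / 2 * |logCrossRatio (sInf (lineParams Ω y v)) (sSup (lineParams Ω y v)) t| := by
  set a := sInf (lineParams Ω y v)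
  set b := sSup (lineParams Ω y v)
  have hne : y ≠ y + t • v := by simp [hv, ht.ne']
  have hInf : sInf (lineParams Ω y (t • v)) = t⁻¹ * a := by
    rw [lineParams_smul Ω y v ht.ne', Real.sInf_smul_of_nonneg (inv_nonneg.mpr ht.le), smul_eq_mul]
  have hSup : sSup (lineParams Ω y (t • v)) = t⁻¹ * b := by
    rw [lineParams_smul Ω y v ht.ne', Real.sSup_smul_of_nonneg (inv_nonneg.mpr ht.le), smul_eq_mul]
  have hcancel (c : ℝ) : (t⁻¹ * c) • t • v = c • v := by
    rw [smul_smul, mul_right_comm, inv_mul_cancel₀ ht.ne', one_mul]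
  simp only [hilbertDist, if_neg hne, add_sub_cancel_left, hInf, hSup, hcancel]
  have hb : 0 < b := ht.trans htb
  have hvn : ‖v‖ ≠ 0 := norm_ne_zero_iff.mpr hv
  rw [norm_add_smul_sub_add_smul, norm_add_smul_sub_add_smul, norm_sub_add_smul, norm_sub_add_smul,
    abs_of_pos (sub_pos.2 (ha.trans ht)), abs_of_pos hb, abs_of_neg (sub_neg.2 htb), abs_of_neg ha,
    logCrossRatio]
  congr 3
  rw [neg_sub, mul_mul_mul_comm, mul_mul_mul_comm (b - t),
    mul_div_mul_right _ _ (mul_ne_zero hvn hvn)]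

theorem hilbertFinsler_eq (hv : v ≠ 0) (ha : sInf (lineParams Ω y v) < 0)
    (hb : 0 < sSup (lineParams Ω y v)) :
    hilbertFinsler Ω y v =
      1 / 2 * (1 / -sInf (lineParams Ω y v) + 1 / sSup (lineParams Ω y v)) := by
  simp only [hilbertFinsler, if_neg hv, norm_sub_add_smul, abs_of_neg ha, abs_of_pos hb]
  field_simp

end HilbertLine

theorem hilbertDist_infinitesimal_finsler_general {n : ℕ}
    (Ω : Set (EuclideanSpace ℝ (Fin n)))
    (hopen : IsOpen Ω) (hbdd : Bornology.IsBounded Ω)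
    (y : EuclideanSpace ℝ (Fin n)) (hy : y ∈ Ω)
    (v : EuclideanSpace ℝ (Fin n)) (hv : v ≠ 0) :
    Filter.Tendsto (fun t : ℝ => hilbertDist Ω y (y + t • v) / t)
      (nhdsWithin 0 (Set.Ioi 0)) (nhds (hilbertFinsler Ω y v)) ∧
    hilbertFinsler Ω y v =
      (‖v‖ / 2) * (1 / ‖y - (y + sInf {t : ℝ | y + t • v ∈ Ω} • v)‖ +
        1 / ‖y - (y + sSup {t : ℝ | y + t • v ∈ Ω} • v)‖) := by
  refine ⟨?_, by rw [hilbertFinsler, if_neg hv]⟩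
  have hS := isOpen_lineParams hopen y v
  have hbddS := isBounded_lineParams hbdd y hv
  have h0 : (0 : ℝ) ∈ lineParams Ω y v := by simpa using hy
  have ha := hS.csInf_lt hbddS.bddBelow h0
  have hb := hS.lt_csSup hbddS.bddAbove h0
  have hderiv := hasDerivAt_logCrossRatio_zero ha hb
  have hpos : 0 < 1 / -sInf (lineParams Ω y v) + 1 / sSup (lineParams Ω y v) :=
    add_pos (one_div_pos.2 (neg_pos.2 ha)) (one_div_pos.2 hb)
  rw [hilbertFinsler_eq hv ha hb, ← abs_of_pos hpos]
  refine ((hderiv.tendsto_abs_div_nhdsGT_zero (logCrossRatio_zero ha.ne hb.ne')).const_mul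
    (1 / 2)).congr' ?_
  filter_upwards [Ioo_mem_nhdsGT hb] with t ⟨ht, htb⟩
  rw [hilbertDist_add_smul hv ha ht htb, mul_div_assoc]

/-- The Hilbert metric induces the Finsler structure `F_Ω` as its infinitesimal norm:
for `y ∈ Ω` and `v ≠ 0`, `lim_{t→0⁺} d_Ω(y, y + t•v)/t = F_Ω(y,v)`, and
`F_Ω(y,v) = (‖v‖/2)(1/‖y − v⁻‖ + 1/‖y − v⁺‖)` where `v⁻`, `v⁺` are the intersection
points of the line through `y` in direction `v` with `∂Ω`. -/
theorem hilbertDist_infinitesimal_finsler {n : ℕ}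
    (Ω : Set (EuclideanSpace ℝ (Fin n)))
    (hne : Ω.Nonempty) (hopen : IsOpen Ω) (hbdd : Bornology.IsBounded Ω)
    (hconv : Convex ℝ Ω) (y : EuclideanSpace ℝ (Fin n)) (hy : y ∈ Ω)
    (v : EuclideanSpace ℝ (Fin n)) (hv : v ≠ 0) :
    Filter.Tendsto (fun t : ℝ => hilbertDist Ω y (y + t • v) / t)
      (nhdsWithin 0 (Set.Ioi 0)) (nhds (hilbertFinsler Ω y v)) ∧
    hilbertFinsler Ω y v =
      (‖v‖ / 2) * (1 / ‖y - (y + sInf {t : ℝ | y + t • v ∈ Ω} • v)‖ +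
        1 / ‖y - (y + sSup {t : ℝ | y + t • v ∈ Ω} • v)‖) :=
  hilbertDist_infinitesimal_finsler_general Ω hopen hbdd y hy v hv
end

section
/- Let n ≥ 1, let F be a norm on ℝⁿ with open unit ball B_F = {v : F(v) < 1}, let B be the open Euclidean unit ball, let λ be Lebesgue measure, and set M = sup{F(v) : ‖v‖ = 1}. Then the eccentricity factor N(F) := Mⁿ · λ(B_F)/λ(B) satisfies N(F) ≥ 1, and N(F) = 1 if and only if F is a positive scalar multiple of the Euclidean norm, namely F(v) = M·‖v‖ for all v. -/
/-!
Write `B_F` for the unit ball of `F`. Since `F ≤ M ‖·‖`, the Euclidean ball of radius `M⁻¹` lies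
in `B_F`, and by scaling its volume is `M⁻ⁿ λ(B)`; hence `N(F) = λ(B_F) / λ(ball 0 M⁻¹) ≥ 1`.
If `F v < M ‖v‖` for some `v`, a multiple of `v` lies in `B_F` but outside the closed ball of
radius `M⁻¹`; as `B_F` is open, this part of `B_F` has positive volume, and `N(F) > 1`.
-/

open MeasureTheory Metric

namespace Seminorm

variable {E : Type*} [NormedAddCommGroup E] [NormedSpace ℝ E] {p : Seminorm ℝ E} {M : ℝ}

theorem exists_mem_sphere_apply_eq_norm_mul (p : Seminorm ℝ E) {x : E} (hx : x ≠ 0) :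
    ∃ u ∈ sphere (0 : E) 1, p x = ‖x‖ * p u := by
  refine ⟨‖x‖⁻¹ • x, mem_sphere_zero_iff_norm.2 (norm_smul_inv_norm (𝕜 := ℝ) hx), ?_⟩
  rw [map_smul_eq_mul, norm_inv, norm_norm, mul_inv_cancel_left₀ (norm_ne_zero_iff.2 hx)]

theorem le_mul_norm_of_forall_mem_sphere {c : ℝ} (h : ∀ x ∈ sphere (0 : E) 1, p x ≤ c)
    (x : E) : p x ≤ c * ‖x‖ := by
  rcases eq_or_ne x 0 with rfl | hx
  · simp
  obtain ⟨u, hu, hpx⟩ := p.exists_mem_sphere_apply_eq_norm_mul hx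
  rw [hpx, mul_comm]
  exact mul_le_mul_of_nonneg_right (h u hu) (norm_nonneg x)

theorem mul_norm_le_of_forall_mem_sphere {c : ℝ} (h : ∀ x ∈ sphere (0 : E) 1, c ≤ p x)
    (x : E) : c * ‖x‖ ≤ p x := by
  rcases eq_or_ne x 0 with rfl | hx
  · simp
  obtain ⟨u, hu, hpx⟩ := p.exists_mem_sphere_apply_eq_norm_mul hx
  rw [hpx, mul_comm c]
  exact mul_le_mul_of_nonneg_left (h u hu) (norm_nonneg x)

section FiniteDimensional

variable [FiniteDimensional ℝ E]

theorem continuous_of_finiteDimensional (p : Seminorm ℝ E) : Continuous p :=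
  continuousOn_univ.1 (p.convexOn.continuousOn isOpen_univ)

theorem le_sSup_image_sphere_mul_norm (p : Seminorm ℝ E) (x : E) :
    p x ≤ sSup (p '' sphere 0 1) * ‖x‖ :=
  have hbdd := ((isCompact_sphere (0 : E) 1).image p.continuous_of_finiteDimensional).bddAbove
  p.le_mul_norm_of_forall_mem_sphere (fun _ hy ↦ le_csSup hbdd (Set.mem_image_of_mem p hy)) x

theorem exists_pos_mul_norm_le (hp : ∀ x, p x = 0 → x = 0) : ∃ m > 0, ∀ x, m * ‖x‖ ≤ p x := by
  rcases (sphere (0 : E) 1).eq_empty_or_nonempty with hempty | hne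
  · exact ⟨1, one_pos, p.mul_norm_le_of_forall_mem_sphere (by simp [hempty])⟩
  obtain ⟨u, hu, hmin⟩ := (isCompact_sphere (0 : E) 1).exists_isMinOn hne
    p.continuous_of_finiteDimensional.continuousOn
  have hu0 : u ≠ 0 := ne_of_mem_sphere hu one_ne_zero
  exact ⟨p u, (apply_nonneg p u).lt_of_ne' (mt (hp u) hu0),
    p.mul_norm_le_of_forall_mem_sphere hmin⟩

theorem isBounded_setOf_lt_one (hp : ∀ x, p x = 0 → x = 0) :
    Bornology.IsBounded {x | p x < 1} := by
  obtain ⟨m, hm, hle⟩ := exists_pos_mul_norm_le hp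
  refine (isBounded_ball (x := (0 : E)) (r := m⁻¹)).subset fun x hx ↦ ?_
  rw [Set.mem_ofPred_eq] at hx
  rw [mem_ball_zero_iff, ← mul_one m⁻¹, lt_inv_mul_iff₀ hm]
  exact (hle x).trans_lt hx

theorem sSup_image_sphere_pos [Nontrivial E] (hp : ∀ x, p x = 0 → x = 0) :
    0 < sSup (p '' sphere (0 : E) 1) := by
  obtain ⟨m, hm, hle⟩ := exists_pos_mul_norm_le hp
  obtain ⟨u, hu⟩ := exists_norm_eq E zero_le_one
  have := (hle u).trans (p.le_sSup_image_sphere_mul_norm u)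
  rw [hu, mul_one, mul_one] at this
  exact hm.trans_le this

end FiniteDimensional

theorem ball_inv_subset_setOf_lt_one (hM : 0 < M) (hle : ∀ x, p x ≤ M * ‖x‖) :
    Metric.ball (0 : E) M⁻¹ ⊆ {x | p x < 1} := fun x hx ↦ by
  rw [mem_ball_zero_iff, ← mul_one M⁻¹, lt_inv_mul_iff₀ hM] at hx
  exact (hle x).trans_lt hx

theorem setOf_lt_one_eq_ball_inv (hM : 0 < M) (heq : ∀ x, p x = M * ‖x‖) :
    {x | p x < 1} = Metric.ball (0 : E) M⁻¹ := by
  ext x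
  rw [Set.mem_ofPred_eq, mem_ball_zero_iff, ← mul_one M⁻¹, lt_inv_mul_iff₀ hM, heq]

section Measure

variable [MeasurableSpace E] [BorelSpace E]

theorem measure_ball_inv_lt_measure_setOf_lt_one [ProperSpace E] (μ : Measure E)
    [μ.IsOpenPosMeasure] [IsFiniteMeasureOnCompacts μ] (hp : Continuous p) (hM : 0 < M)
    (hle : ∀ x, p x ≤ M * ‖x‖) {x : E} (hlt : p x < M * ‖x‖) :
    μ (Metric.ball 0 M⁻¹) < μ {x | p x < 1} := by
  set B := {x | p x < 1}
  obtain ⟨s, hps, hsM⟩ := exists_between hlt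
  have hs : 0 < s := (apply_nonneg p x).trans_lt hps
  have hout : s⁻¹ • x ∈ B \ Metric.closedBall 0 M⁻¹ := by
    refine ⟨?_, ?_⟩
    · rw [Set.mem_ofPred_eq, map_smul_eq_mul, norm_inv, Real.norm_of_nonneg hs.le,
        inv_mul_lt_one₀ hs]
      exact hps
    · rw [mem_closedBall_zero_iff, norm_smul, norm_inv, Real.norm_of_nonneg hs.le, not_le,
        lt_inv_mul_iff₀' hs, inv_mul_lt_iff₀ hM]
      exact hsM
  have hdiff_pos : 0 < μ (B \ Metric.closedBall 0 M⁻¹) :=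
    ((isOpen_lt hp continuous_const).sdiff isClosed_closedBall).measure_pos μ ⟨_, hout⟩
  calc μ (Metric.ball 0 M⁻¹)
      < μ (Metric.ball 0 M⁻¹) + μ (B \ Metric.closedBall 0 M⁻¹) :=
        ENNReal.lt_add_right measure_ball_lt_top.ne hdiff_pos.ne'
    _ ≤ μ (B ∩ Metric.closedBall 0 M⁻¹) + μ (B \ Metric.closedBall 0 M⁻¹) := by
        gcongr
        exact Set.subset_inter (ball_inv_subset_setOf_lt_one hM hle) Metric.ball_subset_closedBall
    _ = μ B := measure_inter_add_sdiff B measurableSet_closedBall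

theorem measure_ball_inv_eq_measure_setOf_lt_one_iff [ProperSpace E] (μ : Measure E)
    [μ.IsOpenPosMeasure] [IsFiniteMeasureOnCompacts μ] (hp : Continuous p) (hM : 0 < M)
    (hle : ∀ x, p x ≤ M * ‖x‖) :
    μ (Metric.ball 0 M⁻¹) = μ {x | p x < 1} ↔ ∀ x, p x = M * ‖x‖ := by
  refine ⟨fun h x ↦ (hle x).eq_of_not_lt fun hlt ↦ ?_, fun h ↦ by
    rw [setOf_lt_one_eq_ball_inv hM h]⟩
  exact (measure_ball_inv_lt_measure_setOf_lt_one μ hp hM hle hlt).ne h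

end Measure

end Seminorm

open Module in
theorem MeasureTheory.Measure.pow_finrank_mul_toReal_div_toReal_measure_ball
    {E : Type*} [NormedAddCommGroup E] [NormedSpace ℝ E] [FiniteDimensional ℝ E]
    [MeasurableSpace E] [BorelSpace E] (μ : Measure E) [μ.IsAddHaarMeasure] {M : ℝ} (hM : 0 < M)
    (s : Set E) :
    M ^ finrank ℝ E * (μ s).toReal / (μ (ball 0 1)).toReal =
      (μ s).toReal / (μ (ball 0 M⁻¹)).toReal := by
  have hball : 0 < (μ (ball (0 : E) 1)).toReal :=
    ENNReal.toReal_pos (measure_ball_pos μ 0 one_pos).ne' measure_ball_lt_top.ne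
  rw [Measure.addHaar_ball_of_pos μ 0 (inv_pos.2 hM), ENNReal.toReal_mul,
    ENNReal.toReal_ofReal (by positivity), inv_pow]
  field_simp

/-- Pointwise lower bound on the eccentricity factor: for a norm `F` on `ℝⁿ`, `n ≥ 1`,
with `M = sup {F v : ‖v‖ = 1}`, the eccentricity factor
`N(F) = Mⁿ · λ(B_F)/λ(B)` satisfies `N(F) ≥ 1`, with equality if and only if
`F` is the scalar multiple `F(v) = M‖v‖` of the Euclidean norm. -/
theorem eccentricity_factor_ge_one {n : ℕ} (hn : 1 ≤ n)
    (F : EuclideanSpace ℝ (Fin n) → ℝ)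
    (hF0 : ∀ v, F v = 0 ↔ v = 0)
    (hFhom : ∀ (t : ℝ) (v), F (t • v) = |t| * F v)
    (hFtri : ∀ v w, F (v + w) ≤ F v + F w)
    (M NF : ℝ)
    (hM : M = sSup (F '' {v | ‖v‖ = 1}))
    (hNF : NF = M ^ n * (volume {v | F v < 1}).toReal /
      (volume (Metric.ball (0 : EuclideanSpace ℝ (Fin n)) 1)).toReal) :
    1 ≤ NF ∧ (NF = 1 ↔ ∀ v, F v = M * ‖v‖) := by
  have : Nontrivial (EuclideanSpace ℝ (Fin n)) :=
    have : Nonempty (Fin n) := ⟨⟨0, hn⟩⟩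
    inferInstance
  obtain ⟨p, rfl⟩ : ∃ p : Seminorm ℝ (EuclideanSpace ℝ (Fin n)), ⇑p = F :=
    ⟨.of F hFtri hFhom, rfl⟩
  have hp : ∀ v, p v = 0 → v = 0 := fun v ↦ (hF0 v).1
  rw [show {v : EuclideanSpace ℝ (Fin n) | ‖v‖ = 1} = sphere 0 1 by ext; simp] at hM
  have hMpos : 0 < M := hM ▸ Seminorm.sSup_image_sphere_pos hp
  have hle : ∀ v, p v ≤ M * ‖v‖ := hM ▸ p.le_sSup_image_sphere_mul_norm
  have hball_pos : 0 < (volume (ball (0 : EuclideanSpace ℝ (Fin n)) M⁻¹)).toReal :=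
    ENNReal.toReal_pos (measure_ball_pos _ _ (inv_pos.2 hMpos)).ne' measure_ball_lt_top.ne
  have hB_ne_top : volume {v | p v < 1} ≠ ⊤ :=
    (Seminorm.isBounded_setOf_lt_one hp).measure_lt_top.ne
  have hscale := volume.pow_finrank_mul_toReal_div_toReal_measure_ball hMpos {v | p v < 1}
  rw [finrank_euclideanSpace_fin] at hscale
  rw [hNF, hscale, one_le_div hball_pos, div_eq_one_iff_eq hball_pos.ne',
    ENNReal.toReal_le_toReal measure_ball_lt_top.ne hB_ne_top,
    ENNReal.toReal_eq_toReal_iff' hB_ne_top measure_ball_lt_top.ne, eq_comm]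
  exact ⟨measure_mono (Seminorm.ball_inv_subset_setOf_lt_one hMpos hle),
    Seminorm.measure_ball_inv_eq_measure_setOf_lt_one_iff volume p.continuous_of_finiteDimensional
      hMpos hle⟩
end

section
/- Let n ≥ 3 and let H be a real symmetric positive definite n×n matrix with trace(H) = 1, and set K = I − H (so K is also symmetric positive definite). Then √(det H)/det(K) ≤ (√n/(n−1))ⁿ = n^{n/2}/(n−1)ⁿ, and equality holds if and only if H = (1/n)·I (in which case K = ((n−1)/n)·I). -/
/-!
Diagonalising `H`, its eigenvalues `x i > 0` sum to `1` and the claim becomes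
`∑ i, ρ (x i) ≤ n ρ (1 / n)` for `ρ x = log x - 2 log (1 - x)`, with equality only at the uniform
point. The function `ρ` is strictly concave on `(0, √2 - 1]` and convex beyond. If all but one
`x i` lie in the concave range, Jensen replaces them by their mean, and the remaining inequality in
one variable is a weighted AM-GM. Otherwise two eigenvalues `a ≥ b` exceed `√2 - 1`, and replacing
them by `a + b - (√2 - 1)` and `√2 - 1` strictly increases the sum and lands in the first case.
-/

open Real Finset Matrix
open scoped ComplexOrder

section Matrix

variable {𝕜 ι : Type*} [RCLike 𝕜] [Fintype ι] [DecidableEq ι] {A : Matrix ι ι 𝕜}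

lemma Matrix.IsHermitian.det_one_sub (hA : A.IsHermitian) :
    (1 - A).det = ∏ i, (1 - (hA.eigenvalues i : 𝕜)) := by
  simpa [eval_charpoly, Polynomial.eval_prod] using congrArg (Polynomial.eval 1) hA.charpoly_eq

lemma Matrix.IsHermitian.one_sub_eq (hA : A.IsHermitian) :
    1 - A = Unitary.conjStarAlgAut 𝕜 _ hA.eigenvectorUnitary
      (diagonal (RCLike.ofReal ∘ (1 - hA.eigenvalues))) := by
  conv_lhs => rw [hA.spectral_theorem, ← map_one (Unitary.conjStarAlgAut 𝕜 _ hA.eigenvectorUnitary)]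
  rw [← map_sub, ← diagonal_one, diagonal_sub]
  congr 2
  ext i
  simp

lemma Matrix.IsHermitian.posDef_one_sub_iff (hA : A.IsHermitian) :
    (1 - A).PosDef ↔ ∀ i, hA.eigenvalues i < 1 := by
  rw [hA.one_sub_eq]
  simp [Unitary.isUnit_coe.posDef_star_right_conjugate_iff, RCLike.algebraMap_eq_ofReal]
  norm_cast

lemma Matrix.IsHermitian.eq_smul_one_of_eigenvalues_eq (hA : A.IsHermitian) {c : ℝ}
    (h : hA.eigenvalues = fun _ => c) : A = (c : 𝕜) • 1 := by
  rw [hA.spectral_theorem, h, Unitary.conjStarAlgAut_apply, Function.comp_def,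
    ← smul_one_eq_diagonal, mul_smul_comm, smul_mul_assoc, mul_one,
    Unitary.mul_star_self_of_mem hA.eigenvectorUnitary.2]

end Matrix

/-- `∑ i, bcgRho (x i) = log (det H / det (1 - H) ^ 2)` for the eigenvalues `x` of `H`. -/
noncomputable def bcgRho (x : ℝ) : ℝ := log x - 2 * log (1 - x)

lemma hasDerivAt_bcgRho {x : ℝ} (hx0 : 0 < x) (hx1 : x < 1) :
    HasDerivAt bcgRho (x⁻¹ + 2 * (1 - x)⁻¹) x := by
  have h1 : HasDerivAt (fun y => 1 - y) (-1) x := by simpa using (hasDerivAt_id x).const_sub 1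
  have h := (hasDerivAt_log hx0.ne').sub ((h1.log (sub_ne_zero.2 hx1.ne')).const_mul 2)
  exact h.congr_deriv (by ring)

lemma sqrt_two_sub_one_sq : (√2 - 1) ^ 2 = 1 - 2 * (√2 - 1) := by
  nlinarith [sq_sqrt (zero_le_two : (0:ℝ) ≤ 2)]

lemma strictConcaveOn_bcgRho : StrictConcaveOn ℝ (Set.Ioc 0 (√2 - 1)) bcgRho := by
  have hr : √2 - 1 < 1 := by nlinarith [sqrt_two_sub_one_sq, sqrt_nonneg 2]
  refine StrictAntiOn.strictConcaveOn_of_deriv (convex_Ioc _ _) ?_ ?_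
  · intro x hx
    exact ((hasDerivAt_bcgRho hx.1 (hx.2.trans_lt hr)).continuousAt).continuousWithinAt
  · rw [interior_Ioc]
    rintro x ⟨hx0, hxr⟩ y ⟨hy0, hyr⟩ hxy
    rw [(hasDerivAt_bcgRho hx0 (hxr.trans hr)).deriv,
      (hasDerivAt_bcgRho hy0 (hyr.trans hr)).deriv, ← sub_pos]
    have h1 : 0 < 1 - x := by linarith
    have h2 : 0 < 1 - y := by linarith
    -- on `(0, √2 - 1)` both factors `1 - x`, `1 - y` exceed `2 - √2 = √2 (√2 - 1)`
    have key : 2 * x * y < (1 - x) * (1 - y) := by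
      nlinarith [sqrt_two_sub_one_sq, mul_lt_mul'' hxr hyr hx0.le hy0.le]
    have : x⁻¹ + 2 * (1 - x)⁻¹ - (y⁻¹ + 2 * (1 - y)⁻¹)
        = (y - x) * ((1 - x) * (1 - y) - 2 * x * y) / (x * y * ((1 - x) * (1 - y))) := by
      field_simp; ring
    rw [this]
    exact div_pos (mul_pos (by linarith) (by linarith)) (by positivity)

lemma bcgRho_add_mul_lt {m t : ℝ} (hm : 3 ≤ m) (ht0 : 0 < t) (ht1 : t < 1) (ht : t ≠ m⁻¹) :
    bcgRho t + (m - 1) * bcgRho ((1 - t) / (m - 1)) < m * bcgRho m⁻¹ := by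
  have hm1 : 0 < m - 1 := by linarith
  have hm0 : 0 < m := by linarith
  have hd : 0 < 2 * m - 2 := by linarith
  -- weighted AM-GM: weights `(1, m - 3, m) / (2m - 2)` at the points
  -- `(m - 1)² t`, `(m - 1) (1 - t)`, `(m - 1)² / m`, whose weighted mean is `m - 2 + t`
  have hJ : 1 / (2 * m - 2) * log ((m - 1) ^ 2 * t)
      + (m - 3) / (2 * m - 2) * log ((m - 1) * (1 - t))
      + m / (2 * m - 2) * log ((m - 1) ^ 2 / m) < log (m - 2 + t) := by
    have hmean : 1 / (2 * m - 2) * ((m - 1) ^ 2 * t) + (m - 3) / (2 * m - 2) * ((m - 1) * (1 - t))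
        + m / (2 * m - 2) * ((m - 1) ^ 2 / m) = m - 2 + t := by
      field_simp; ring
    have hne : (m - 1) ^ 2 * t ≠ (m - 1) ^ 2 / m := fun h => ht <| by
      field_simp at h; exact eq_inv_of_mul_eq_one_right h
    have h := (strictConcaveOn_log_Ioi.lt_map_sum_iff_of_nonneg (t := univ)
      (w := ![1 / (2 * m - 2), (m - 3) / (2 * m - 2), m / (2 * m - 2)])
      (p := ![(m - 1) ^ 2 * t, (m - 1) * (1 - t), (m - 1) ^ 2 / m]) ?_ ?_ ?_).2
      ⟨0, mem_univ _, 2, mem_univ _, by simp [hd.ne'], by simp [hd.ne', hm0.ne'], hne⟩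
    · simp only [Fin.sum_univ_three, Matrix.cons_val, smul_eq_mul] at h
      rwa [hmean] at h
    · intro i _; fin_cases i <;> simp <;> first | linarith | exact div_nonneg (by linarith) hd.le
    · simp [Fin.sum_univ_three]; field_simp; ring
    · intro i _; fin_cases i <;> simp <;> positivity
  rw [log_mul (by positivity) ht0.ne', log_mul hm1.ne' (by linarith),
    log_div (by positivity) hm0.ne', log_pow] at hJ
  have e1 : 1 - (1 - t) / (m - 1) = (m - 2 + t) / (m - 1) := by field_simp; ring
  have e2 : 1 - m⁻¹ = (m - 1) / m := by field_simp
  unfold bcgRho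
  rw [e1, e2, log_div (by linarith) hm1.ne', log_div (by linarith) hm1.ne',
    log_div hm1.ne' hm0.ne', log_inv]
  field_simp at hJ
  push_cast at hJ
  linarith

lemma bcgRho_add_bcgRho {a b : ℝ} (ha0 : 0 < a) (ha1 : a < 1) (hb0 : 0 < b) (hb1 : b < 1) :
    bcgRho a + bcgRho b = log (a * b / ((1 - a) * (1 - b)) ^ 2) := by
  have h1 : 0 < (1 - a) * (1 - b) := mul_pos (sub_pos.2 ha1) (sub_pos.2 hb1)
  rw [log_div (by positivity) (by positivity), log_mul ha0.ne' hb0.ne', log_pow,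
    log_mul (by linarith) (by linarith), bcgRho, bcgRho]
  push_cast
  ring

/-- On `q > c`, the map `q ↦ q / (c + q)²` is decreasing, and `a b ↦ a b / ((1 - a) (1 - b))²`
depends only on `a + b = 1 - c` and `q = a b`; moving `b` down to `√2 - 1` lowers `q`, which
stays above `c`. -/
lemma bcgRho_add_bcgRho_lt {a b : ℝ} (hb : √2 - 1 < b) (hba : b ≤ a) (hab : a + b < 1) :
    bcgRho a + bcgRho b < bcgRho (a + b - (√2 - 1)) + bcgRho (√2 - 1) := by
  set r := √2 - 1 with hr_def
  have hr : r ^ 2 = 1 - 2 * r := sqrt_two_sub_one_sq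
  have hr0 : 0 < r := by rw [hr_def, sub_pos, lt_sqrt zero_le_one]; norm_num
  set c := 1 - (a + b) with hc
  set q := r * (a + b - r) with hq
  have hqc : c < q := by nlinarith
  have hqab : q < a * b := by nlinarith [mul_pos (sub_pos.2 (hb.trans_le hba)) (sub_pos.2 hb)]
  have hc0 : 0 < c := by linarith
  have hb0 : 0 < b := hr0.trans hb
  have ha0 : 0 < a := hb0.trans_le hba
  have hq0 : 0 < q := hc0.trans hqc
  rw [bcgRho_add_bcgRho (by linarith) (by linarith) (by linarith) (by linarith),
    bcgRho_add_bcgRho (by linarith) (by linarith) hr0 (by linarith),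
    show (1 - a) * (1 - b) = c + a * b by ring, show (1 - (a + b - r)) * (1 - r) = c + q by ring]
  refine log_lt_log (by positivity) ?_
  rw [div_lt_div_iff₀ (by positivity) (by positivity)]
  have := mul_pos (sub_pos.2 hqab) (sub_pos.2 (mul_lt_mul'' hqc (hqc.trans hqab) hc0.le hc0.le))
  linear_combination this

variable {ι : Type*}

lemma ConcaveOn.sum_le_card_mul_map_average {D : Set ℝ} {f : ℝ → ℝ} (hf : ConcaveOn ℝ D f)
    {s : Finset ι} (hs : s.Nonempty) {x : ι → ℝ} (hx : ∀ j ∈ s, x j ∈ D) :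
    ∑ j ∈ s, f (x j) ≤ #s * f ((∑ j ∈ s, x j) / #s) := by
  have hcard : (0 : ℝ) < #s := by exact_mod_cast hs.card_pos
  have h := hf.le_map_sum (t := s) (w := fun _ => (#s : ℝ)⁻¹) (fun _ _ => by positivity)
    (by simp [hcard.ne']) hx
  simp only [smul_eq_mul, ← mul_sum] at h
  rw [inv_mul_eq_div, inv_mul_eq_div, div_le_iff₀ hcard] at h
  linarith

lemma StrictConcaveOn.sum_lt_card_mul_map_average {D : Set ℝ} {f : ℝ → ℝ}
    (hf : StrictConcaveOn ℝ D f) {s : Finset ι} {x : ι → ℝ} (hx : ∀ j ∈ s, x j ∈ D)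
    (hne : ∃ j ∈ s, x j ≠ (∑ j ∈ s, x j) / #s) :
    ∑ j ∈ s, f (x j) < #s * f ((∑ j ∈ s, x j) / #s) := by
  obtain ⟨j, hj, hxj⟩ := hne
  have hcard : (0 : ℝ) < #s := by exact_mod_cast card_pos.2 ⟨j, hj⟩
  have h := (hf.lt_map_sum_iff_of_nonneg' (t := s) (w := fun _ => (#s : ℝ)⁻¹)
    (fun _ _ => by positivity) (by simp [hcard.ne']) hx).2
    ⟨j, hj, by positivity, by rwa [← smul_sum, smul_eq_mul, inv_mul_eq_div]⟩
  simp only [smul_eq_mul, ← mul_sum] at h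
  rw [inv_mul_eq_div, inv_mul_eq_div, div_lt_iff₀ hcard] at h
  linarith

variable [Fintype ι]

lemma sum_apply_update {α M : Type*} [AddCommGroup M] [DecidableEq ι] (f : α → M) (x : ι → α)
    (j : ι) (a : α) :
    ∑ i, f (Function.update x j a i) = ∑ i, f (x i) - f (x j) + f a := by
  simp only [Function.apply_update (fun _ => f), sum_update_of_mem (mem_univ j),
    sum_eq_add_sum_sdiff_singleton_of_mem (mem_univ j) (fun i => f (x i))]
  abel

lemma lt_one_of_sum_eq_one {x : ι → ℝ} (hn : 1 < Fintype.card ι) (hx : ∀ i, 0 < x i)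
    (hsum : ∑ i, x i = 1) (i : ι) : x i < 1 := by
  classical
  have hrest : (univ.erase i).Nonempty :=
    card_pos.1 (by rw [card_erase_of_mem (mem_univ i), card_univ]; omega)
  linarith [add_sum_erase univ x (mem_univ i), sum_pos (fun j _ => hx j) hrest]

theorem sum_bcgRho_lt_of_forall_ne_le {x : ι → ℝ} (hn : 3 ≤ Fintype.card ι)
    (hx : ∀ i, 0 < x i) (hsum : ∑ i, x i = 1) {i₀ : ι} (hsmall : ∀ j ≠ i₀, x j ≤ √2 - 1)
    (hne : x ≠ fun _ => (Fintype.card ι : ℝ)⁻¹) :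
    ∑ i, bcgRho (x i) < Fintype.card ι * bcgRho (Fintype.card ι : ℝ)⁻¹ := by
  classical
  set n := Fintype.card ι
  set s := univ.erase i₀
  set t := x i₀
  have hn3 : (3 : ℝ) ≤ n := by exact_mod_cast hn
  have hcard : (#s : ℝ) = n - 1 := by
    rw [card_erase_of_mem (mem_univ _), card_univ, Nat.cast_pred (by omega)]
  have hs : s.Nonempty := card_pos.1 (by rw [card_erase_of_mem (mem_univ _), card_univ]; omega)
  have hs_sum : ∑ j ∈ s, x j = 1 - t := by rw [← hsum, ← add_sum_erase _ _ (mem_univ i₀)]; ring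
  have hmean : (∑ j ∈ s, x j) / #s = (1 - t) / (n - 1) := by rw [hs_sum, hcard]
  have hmem : ∀ j ∈ s, x j ∈ Set.Ioc 0 (√2 - 1) :=
    fun j hj => ⟨hx j, hsmall j (ne_of_mem_erase hj)⟩
  have hsplit : ∑ i, bcgRho (x i) = bcgRho t + ∑ j ∈ s, bcgRho (x j) :=
    (add_sum_erase _ _ (mem_univ i₀)).symm
  have ht1 : t < 1 := lt_one_of_sum_eq_one (by omega) hx hsum i₀
  by_cases ht : t = (n : ℝ)⁻¹
  · have hu : (1 - t) / (n - 1) = (n : ℝ)⁻¹ := by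
      have : (n : ℝ) - 1 ≠ 0 := by linarith
      rw [ht]; field_simp
    have hne' : ∃ j ∈ s, x j ≠ (∑ j ∈ s, x j) / #s := by
      by_contra! h
      refine hne (funext fun i => ?_)
      rcases eq_or_ne i i₀ with rfl | hi
      · exact ht
      · rw [h i (mem_erase.2 ⟨hi, mem_univ _⟩), hmean, hu]
    calc ∑ i, bcgRho (x i) = bcgRho t + ∑ j ∈ s, bcgRho (x j) := hsplit
      _ < bcgRho t + #s * bcgRho ((∑ j ∈ s, x j) / #s) := by
        gcongr; exact strictConcaveOn_bcgRho.sum_lt_card_mul_map_average hmem hne'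
      _ = n * bcgRho (n : ℝ)⁻¹ := by rw [hmean, hu, hcard, ht]; ring
  · calc ∑ i, bcgRho (x i) = bcgRho t + ∑ j ∈ s, bcgRho (x j) := hsplit
      _ ≤ bcgRho t + #s * bcgRho ((∑ j ∈ s, x j) / #s) := by
        gcongr; exact strictConcaveOn_bcgRho.concaveOn.sum_le_card_mul_map_average hs hmem
      _ = bcgRho t + (n - 1) * bcgRho ((1 - t) / (n - 1)) := by rw [hmean, hcard]
      _ < n * bcgRho (n : ℝ)⁻¹ := bcgRho_add_mul_lt hn3 (hx i₀) ht1 ht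

lemma add_add_le_sum {x : ι → ℝ} (hx : ∀ i, 0 ≤ x i) {i j k : ι} (hij : i ≠ j) (hik : i ≠ k)
    (hjk : j ≠ k) : x i + x j + x k ≤ ∑ l, x l := by
  classical
  have h := sum_le_sum_of_subset_of_nonneg (subset_univ {i, j, k}) fun l _ _ => hx l
  rwa [sum_insert (by simp [hij, hik]), sum_pair hjk, ← add_assoc] at h

theorem sum_bcgRho_lt_of_lt_of_le {x : ι → ℝ} (hn : 3 ≤ Fintype.card ι) (hx : ∀ i, 0 < x i)
    (hsum : ∑ i, x i = 1) {j k : ι} (hjk : j ≠ k) (hk : √2 - 1 < x k) (hkj : x k ≤ x j) :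
    ∑ i, bcgRho (x i) < Fintype.card ι * bcgRho (Fintype.card ι : ℝ)⁻¹ := by
  classical
  set n := Fintype.card ι
  set r := √2 - 1 with hr_def
  have hr : r ^ 2 = 1 - 2 * r := sqrt_two_sub_one_sq
  have hr3 : 1 / 3 < r := by rw [hr_def, lt_sub_iff_add_lt, lt_sqrt (by norm_num)]; norm_num
  have hthree : ∀ i, i ≠ j → i ≠ k → x i + x j + x k ≤ 1 :=
    fun i hij hik => hsum ▸ add_add_le_sum (fun l => (hx l).le) hij hik hjk
  obtain ⟨i, hi, hik⟩ := exists_mem_ne (s := univ.erase j)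
    (by rw [card_erase_of_mem (mem_univ j), card_univ]; omega) k
  have hjk_lt : x j + x k < 1 := by linarith [hthree i (ne_of_mem_erase hi) hik, hx i]
  set y := Function.update (Function.update x k r) j (x j + x k - r)
  have hyj : y j = x j + x k - r := by simp [y]
  have hyk : y k = r := by simp [y, hjk.symm]
  have hy_sum (f : ℝ → ℝ) :
      ∑ i, f (y i) = ∑ i, f (x i) - f (x k) + f r - f (x j) + f (x j + x k - r) := by
    rw [sum_apply_update, sum_apply_update, Function.update_of_ne hjk]
  have hy_pos : ∀ i, 0 < y i := by
    intro i
    by_cases hij : i = j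
    · rw [hij, hyj]; linarith
    by_cases hik : i = k
    · rw [hik, hyk]; linarith
    simpa [y, hij, hik] using hx i
  have hy_small : ∀ i ≠ j, y i ≤ r := by
    intro i hij
    by_cases hik : i = k
    · rw [hik, hyk]
    simp only [y, Function.update_of_ne hij, Function.update_of_ne hik]
    nlinarith [hthree i hij hik]
  have hy_ne : y ≠ fun _ => (n : ℝ)⁻¹ := by
    intro h
    have hn' : (n : ℝ)⁻¹ ≤ 1 / 3 := by
      rw [inv_le_comm₀ (by positivity) (by norm_num)]; norm_num; exact_mod_cast hn
    linarith [hyk ▸ congrFun h k]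
  calc ∑ i, bcgRho (x i) < ∑ i, bcgRho (y i) := by
        rw [hy_sum]; linarith [bcgRho_add_bcgRho_lt hk hkj hjk_lt]
    _ < n * bcgRho (n : ℝ)⁻¹ :=
        sum_bcgRho_lt_of_forall_ne_le hn hy_pos (by linarith [hy_sum fun z => z]) hy_small hy_ne

theorem sum_bcgRho_lt {x : ι → ℝ} (hn : 3 ≤ Fintype.card ι) (hx : ∀ i, 0 < x i)
    (hsum : ∑ i, x i = 1) (hne : x ≠ fun _ => (Fintype.card ι : ℝ)⁻¹) :
    ∑ i, bcgRho (x i) < Fintype.card ι * bcgRho (Fintype.card ι : ℝ)⁻¹ := by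
  by_cases hsmall : ∃ i₀, ∀ j ≠ i₀, x j ≤ √2 - 1
  · obtain ⟨i₀, hsmall⟩ := hsmall
    exact sum_bcgRho_lt_of_forall_ne_le hn hx hsum hsmall hne
  push Not at hsmall
  have : Nonempty ι := Fintype.card_pos_iff.1 (by omega)
  obtain ⟨j, -, hj⟩ := hsmall (Classical.arbitrary ι)
  obtain ⟨k, hkj, hk⟩ := hsmall j
  rcases le_total (x k) (x j) with hkj' | hjk'
  · exact sum_bcgRho_lt_of_lt_of_le hn hx hsum hkj.symm hk hkj'
  · exact sum_bcgRho_lt_of_lt_of_le hn hx hsum hkj hj hjk'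

theorem sum_bcgRho_le {x : ι → ℝ} (hn : 3 ≤ Fintype.card ι) (hx : ∀ i, 0 < x i)
    (hsum : ∑ i, x i = 1) :
    ∑ i, bcgRho (x i) ≤ Fintype.card ι * bcgRho (Fintype.card ι : ℝ)⁻¹ := by
  rcases eq_or_ne x (fun _ => (Fintype.card ι : ℝ)⁻¹) with rfl | hne
  · simp
  · exact (sum_bcgRho_lt hn hx hsum hne).le

theorem eq_const_of_sum_bcgRho_eq {x : ι → ℝ} (hn : 3 ≤ Fintype.card ι) (hx : ∀ i, 0 < x i)
    (hsum : ∑ i, x i = 1)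
    (h : ∑ i, bcgRho (x i) = Fintype.card ι * bcgRho (Fintype.card ι : ℝ)⁻¹) :
    x = fun _ => (Fintype.card ι : ℝ)⁻¹ :=
  not_not.1 fun hne => (sum_bcgRho_lt hn hx hsum hne).ne h

lemma sqrt_prod_div_prod_one_sub {x : ι → ℝ} (hx0 : ∀ i, 0 < x i) (hx1 : ∀ i, x i < 1) :
    √(∏ i, x i) / ∏ i, (1 - x i) = exp ((∑ i, bcgRho (x i)) / 2) := by
  have h1 : ∏ i, x i = exp (∑ i, log (x i)) := by
    rw [exp_sum]; exact prod_congr rfl fun i _ => (exp_log (hx0 i)).symm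
  have h2 : ∏ i, (1 - x i) = exp (∑ i, log (1 - x i)) := by
    rw [exp_sum]; exact prod_congr rfl fun i _ => (exp_log (sub_pos.2 (hx1 i))).symm
  rw [h1, h2, ← exp_half, ← exp_sub]
  simp only [bcgRho, sum_sub_distrib, ← mul_sum]
  ring_nf

lemma sqrt_inv_pow_div_one_sub_inv_pow (n : ℕ) :
    √((n : ℝ)⁻¹ ^ n) / (1 - (n : ℝ)⁻¹) ^ n = √n ^ n / ((n : ℝ) - 1) ^ n := by
  rcases n.eq_zero_or_pos with rfl | hn
  · simp
  have hn' : (0 : ℝ) < n := by exact_mod_cast hn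
  have hsqrt : √((n : ℝ)⁻¹ ^ n) = (√n)⁻¹ ^ n := by
    rw [← sqrt_inv, ← sqrt_sq (by positivity : 0 ≤ √((n : ℝ)⁻¹) ^ n), ← pow_mul, mul_comm,
      pow_mul, sq_sqrt (by positivity)]
  rw [hsqrt, ← div_pow, ← div_pow]
  congr 1
  have : 0 < √(n : ℝ) := sqrt_pos.2 hn'
  field_simp
  rw [sq_sqrt hn'.le]

lemma sqrt_pow_div_sub_one_pow_eq_exp {n : ℕ} (hn : 1 < n) :
    √n ^ n / ((n : ℝ) - 1) ^ n = exp (n * bcgRho (n : ℝ)⁻¹ / 2) := by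
  rw [← sqrt_inv_pow_div_one_sub_inv_pow]
  simpa using sqrt_prod_div_prod_one_sub (x := fun _ : Fin n => (n : ℝ)⁻¹)
    (fun _ => by positivity) (fun _ => inv_lt_one_of_one_lt₀ (by exact_mod_cast hn))

/-- The Besson–Courtois–Gallot linear-algebra lemma: for `n ≥ 3` and a real symmetric
positive definite `n×n` matrix `H` with `tr H = 1`, the matrix `K = I − H` is also
positive definite, `√(det H)/det K ≤ (√n/(n−1))ⁿ`, and equality holds if and only if
`H = (1/n)·I`, in which case `K = ((n−1)/n)·I`. -/
theorem bcg_linear_algebra_lemma {n : ℕ} (hn : 3 ≤ n)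
    (H : Matrix (Fin n) (Fin n) ℝ) (hH : H.PosDef) (htr : H.trace = 1) :
    (1 - H).PosDef ∧
    Real.sqrt H.det / (1 - H).det ≤ Real.sqrt n ^ n / ((n : ℝ) - 1) ^ n ∧
    (Real.sqrt H.det / (1 - H).det = Real.sqrt n ^ n / ((n : ℝ) - 1) ^ n ↔
      H = (n : ℝ)⁻¹ • 1) ∧
    (H = (n : ℝ)⁻¹ • 1 → (1 : Matrix (Fin n) (Fin n) ℝ) - H = (((n : ℝ) - 1) / n) • 1) := by
  set x := hH.1.eigenvalues
  have hcard : 3 ≤ Fintype.card (Fin n) := by simpa using hn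
  have hx0 : ∀ i, 0 < x i := hH.eigenvalues_pos
  have hsum : ∑ i, x i = 1 := by simpa [hH.1.trace_eq_sum_eigenvalues] using htr
  have hx1 : ∀ i, x i < 1 := lt_one_of_sum_eq_one (by omega) hx0 hsum
  have hratio : √H.det / (1 - H).det = exp ((∑ i, bcgRho (x i)) / 2) := by
    rw [hH.1.det_eq_prod_eigenvalues, hH.1.det_one_sub]
    simpa using sqrt_prod_div_prod_one_sub hx0 hx1
  have hK : H = (n : ℝ)⁻¹ • 1 → 1 - H = (1 - (n : ℝ)⁻¹) • (1 : Matrix (Fin n) (Fin n) ℝ) := by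
    rintro rfl; rw [sub_smul, one_smul]
  have hbound := sqrt_pow_div_sub_one_pow_eq_exp (n := n) (by omega)
  refine ⟨hH.1.posDef_one_sub_iff.2 hx1, ?_, ⟨fun h => ?_, fun h => ?_⟩, fun h => ?_⟩
  · rw [hratio, hbound]
    gcongr
    simpa using sum_bcgRho_le hcard hx0 hsum
  · rw [hratio, hbound, exp_eq_exp, div_left_inj' two_ne_zero] at h
    have hx : x = fun _ => (n : ℝ)⁻¹ := by
      simpa using eq_const_of_sum_bcgRho_eq hcard hx0 hsum (by simpa using h)
    simpa using hH.1.eq_smul_one_of_eigenvalues_eq hx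
  · rw [hK h, h, det_smul, det_smul, det_one, mul_one, mul_one, Fintype.card_fin]
    exact sqrt_inv_pow_div_one_sub_inv_pow n
  · have hn0 : (n : ℝ) ≠ 0 := Nat.cast_ne_zero.2 (by omega)
    rw [hK h]
    congr 1
    field_simp
end
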